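/- Suppose S ⊆ ℂ^N is a decoherence-free subspace: S is invariant under H (H x ∈ S for all x ∈ S), and for every density matrix ρ with supp(ρ) ⊆ S the dissipative part vanishes, Σ_d (V_d ρ V_d† - ½(V_d† V_d ρ + ρ V_d† V_d)) = 0. Then every density matrix ρ with supp(ρ) ⊆ S belongs to the invariant set: ρ lies in the subspace E_cc of M_N(ℂ) spanned by all eigenspaces of 𝓛 corresponding to eigenvalues with zero real part. -/

import Mathlib

open Matrix
open scoped ComplexOrder

attribute [local instance] Matrix.normedAddCommGroup Matrix.normedSpace

/-- The Lindblad generator `𝓛(ρ) = -i[H,ρ] + Σ_d (V_d ρ V_d† - ½(V_d† V_d ρ + ρ V_d† V_d))`,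
as a `ℂ`-linear endomorphism of the matrix space. -/
noncomputable def lindbladOp {n : Type*} [Fintype n] [DecidableEq n] {ι : Type*} [Fintype ι]
    (H : Matrix n n ℂ) (V : ι → Matrix n n ℂ) :
    Matrix n n ℂ →ₗ[ℂ] Matrix n n ℂ where
  toFun ρ := -Complex.I • (H * ρ - ρ * H) +
    ∑ d, (V d * ρ * (V d)ᴴ - (1 / 2 : ℂ) • ((V d)ᴴ * V d * ρ + ρ * ((V d)ᴴ * V d)))
  map_add' x y := by
    simp only [mul_add, add_mul, smul_add, sub_eq_add_neg, neg_add,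
      Finset.sum_add_distrib, Finset.sum_neg_distrib]
    abel
  map_smul' c x := by
    simp only [Matrix.mul_smul, Matrix.smul_mul, smul_sub, smul_add, Finset.smul_sum,
      smul_comm c, RingHom.id_apply]

/-- A density matrix: positive semidefinite with trace one. -/
def IsDensityMatrix {n : Type*} [Fintype n] (ρ : Matrix n n ℂ) : Prop :=
  ρ.PosSemidef ∧ ρ.trace = 1

/-- A steady state of the Lindblad dynamics. -/
noncomputable def IsSteadyState {n : Type*} [Fintype n] [DecidableEq n] {ι : Type*} [Fintype ι]
    (H : Matrix n n ℂ) (V : ι → Matrix n n ℂ) (ρ : Matrix n n ℂ) : Prop :=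
  IsDensityMatrix ρ ∧ lindbladOp H V ρ = 0

/-- The support of a matrix: its range as a linear map `ℂ^N → ℂ^N`. -/
noncomputable def matSupport {n : Type*} [Fintype n] (ρ : Matrix n n ℂ) :
    Submodule ℂ (n → ℂ) :=
  LinearMap.range ρ.mulVecLin

/-- Time evolution `ρ(t) = exp(t𝓛)(ρ₀)`. -/
noncomputable def evolve {n : Type*} [Fintype n] [DecidableEq n] {ι : Type*} [Fintype ι]
    (H : Matrix n n ℂ) (V : ι → Matrix n n ℂ) (t : ℝ) (ρ : Matrix n n ℂ) : Matrix n n ℂ :=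
  haveI : IsTopologicalRing (Matrix n n ℂ →L[ℂ] Matrix n n ℂ) := by
    letI : NormedRing (Matrix n n ℂ →L[ℂ] Matrix n n ℂ) := ContinuousLinearMap.toNormedRing
    exact NonUnitalSeminormedRing.toIsTopologicalRing
  NormedSpace.exp ((t : ℂ) • (LinearMap.toContinuousLinearMap (lindbladOp H V))) ρ

/-- The subspace of `M_N(ℂ)` spanned by all eigenspaces of `𝓛` corresponding to
eigenvalues with zero real part. -/
noncomputable def Ecc {n : Type*} [Fintype n] [DecidableEq n] {ι : Type*} [Fintype ι]
    (H : Matrix n n ℂ) (V : ι → Matrix n n ℂ) : Submodule ℂ (Matrix n n ℂ) :=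
  ⨆ γ ∈ {γ : ℂ | γ.re = 0 ∧ Module.End.HasEigenvalue (lindbladOp H V) γ},
    Module.End.eigenspace (lindbladOp H V) γ

/-!
Rescaling and polarization turn the vanishing of the (linear) dissipator on density matrices
supported in `S` into its vanishing on every `|x⟩⟨y|` with `x, y ∈ S`. Since `S` is invariant
under the Hermitian `H`, it is spanned by eigenvectors of `H` with real eigenvalues, and for such
`H x = μ x`, `H y = ν y` the matrix `|x⟩⟨y|` is an eigenvector of `𝓛` with eigenvalue
`-i (μ - ν)`. Finally, the spectral decomposition writes a density matrix supported in `S` as a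
combination of `|u⟩⟨u|` with `u ∈ S`.
-/

open Module.End

section Dissipation

variable {n : Type*} [Fintype n]

lemma matSupport_smul_le (c : ℂ) (A : Matrix n n ℂ) : matSupport (c • A) ≤ matSupport A := by
  rintro _ ⟨v, rfl⟩
  exact ⟨c • v, by simp⟩

lemma matSupport_vecMulVec_le (x y : n → ℂ) : matSupport (vecMulVec x y) ≤ ℂ ∙ x := by
  rintro _ ⟨v, rfl⟩
  exact Submodule.mem_span_singleton.2 ⟨y ⬝ᵥ v, by simp [vecMulVec_mulVec]⟩

lemma smul_vecMulVec_star_eq_sum (x y : n → ℂ) :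
    (4 : ℂ) • vecMulVec x (star y) =
      ∑ k : Fin 4, Complex.I ^ (k : ℕ) •
        vecMulVec (x + Complex.I ^ (k : ℕ) • y) (star (x + Complex.I ^ (k : ℕ) • y)) := by
  ext i j
  simp only [Matrix.smul_apply, vecMulVec_apply, Pi.star_apply, RCLike.star_def, smul_eq_mul,
    star_add, star_smul, star_pow, Complex.conj_I, Fin.sum_univ_four, Fin.isValue,
    Fin.coe_ofNat_eq_mod, Nat.zero_mod, pow_zero, one_smul, Nat.one_mod, pow_succ, one_mul,
    mul_neg, neg_smul, Nat.reduceMod, Complex.I_mul_I, neg_mul, neg_neg, Nat.mod_succ,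
    Matrix.add_apply, Pi.add_apply, Pi.smul_apply, Pi.neg_apply, Matrix.neg_apply]
  ring_nf
  simp only [Complex.I_sq]
  ring

variable {M : Type*} [AddCommGroup M] [Module ℂ M] (L : Matrix n n ℂ →ₗ[ℂ] M)
  {S : Submodule ℂ (n → ℂ)}

lemma map_eq_zero_of_posSemidef (hL : ∀ ρ, IsDensityMatrix ρ → matSupport ρ ≤ S → L ρ = 0)
    {A : Matrix n n ℂ} (hA : A.PosSemidef) (hAS : matSupport A ≤ S) : L A = 0 := by
  by_cases htr : A.trace = 0
  · rw [hA.trace_eq_zero_iff.1 htr, map_zero]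
  have hρ : IsDensityMatrix (A.trace⁻¹ • A) :=
    ⟨hA.smul (inv_nonneg.2 hA.trace_nonneg), by rw [trace_smul, smul_eq_mul, inv_mul_cancel₀ htr]⟩
  have := hL _ hρ ((matSupport_smul_le _ A).trans hAS)
  rwa [map_smul, smul_eq_zero_iff_right (inv_ne_zero htr)] at this

lemma map_vecMulVec_star_eq_zero (hL : ∀ ρ, IsDensityMatrix ρ → matSupport ρ ≤ S → L ρ = 0)
    {x y : n → ℂ} (hx : x ∈ S) (hy : y ∈ S) : L (vecMulVec x (star y)) = 0 := by
  have hself : ∀ z ∈ S, L (vecMulVec z (star z)) = 0 := fun z hz =>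
    map_eq_zero_of_posSemidef L hL (posSemidef_vecMulVec_self_star z)
      ((matSupport_vecMulVec_le _ _).trans ((S.span_singleton_le_iff_mem z).2 hz))
  have := congrArg L (smul_vecMulVec_star_eq_sum x y)
  simp only [map_smul, map_sum, hself _ (S.add_mem hx (S.smul_mem _ hy)), smul_zero,
    Finset.sum_const_zero] at this
  exact (smul_eq_zero_iff_right four_ne_zero).1 this

end Dissipation

section Hermitian

variable {n : Type*} [Fintype n] {H : Matrix n n ℂ}

lemma Matrix.IsHermitian.im_eq_zero_of_mulVec_eq_smul (hH : H.IsHermitian) {x : n → ℂ} {μ : ℂ}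
    (hx : x ≠ 0) (h : H *ᵥ x = μ • x) : μ.im = 0 := by
  have key : star μ * (star x ⬝ᵥ x) = μ * (star x ⬝ᵥ x) :=
    calc star μ * (star x ⬝ᵥ x) = star (H *ᵥ x) ⬝ᵥ x := by
          rw [h, star_smul, smul_dotProduct, smul_eq_mul]
      _ = star x ⬝ᵥ (H *ᵥ x) := by rw [star_mulVec, hH.eq, dotProduct_mulVec]
      _ = μ * (star x ⬝ᵥ x) := by rw [h, dotProduct_smul, smul_eq_mul]
  exact Complex.conj_eq_iff_im.1 (mul_right_cancel₀ (dotProduct_star_self_eq_zero.not.2 hx) key)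

variable [DecidableEq n]

lemma Matrix.IsHermitian.iSup_eigenspace_eq_top (hH : H.IsHermitian) :
    ⨆ μ : ℂ, eigenspace (toLin' H) μ = ⊤ := by
  let b := hH.eigenvectorBasis.toBasis.map (WithLp.linearEquiv 2 ℂ (n → ℂ))
  rw [eq_top_iff, ← b.span_eq, Submodule.span_le]
  rintro _ ⟨j, rfl⟩
  refine Submodule.mem_iSup_of_mem (hH.eigenvalues j : ℂ) (mem_eigenspace_iff.2 ?_)
  simpa [b, Complex.real_smul] using hH.mulVec_eigenvectorBasis j

lemma Matrix.IsHermitian.eq_iSup_inf_eigenspace (hH : H.IsHermitian) {S : Submodule ℂ (n → ℂ)}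
    (hS : ∀ x ∈ S, H *ᵥ x ∈ S) : S = ⨆ μ : ℝ, S ⊓ eigenspace (toLin' H) μ := by
  refine le_antisymm ?_ (iSup_le fun _ => inf_le_left)
  calc S = S ⊓ ⨆ μ : ℂ, eigenspace (toLin' H) μ := by rw [hH.iSup_eigenspace_eq_top, inf_top_eq]
    _ = ⨆ μ : ℂ, S ⊓ eigenspace (toLin' H) μ := Submodule.inf_iSup_genEigenspace hS 1
    _ ≤ _ := iSup_le fun μ x hx => by
      rcases eq_or_ne x 0 with rfl | hx0
      · exact Submodule.zero_mem _
      have hμ : (μ.re : ℂ) = μ :=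
        Complex.ext rfl (by simp [hH.im_eq_zero_of_mulVec_eq_smul hx0 (mem_eigenspace_iff.1 hx.2)])
      exact Submodule.mem_iSup_of_mem μ.re (by rwa [hμ])

lemma Matrix.IsHermitian.eq_sum_smul_vecMulVec {A : Matrix n n ℂ} (hA : A.IsHermitian) :
    A = ∑ j, (hA.eigenvalues j : ℂ) •
      vecMulVec ⇑(hA.eigenvectorBasis j) (star ⇑(hA.eigenvectorBasis j)) := by
  conv_lhs => rw [hA.spectral_theorem]
  ext i k
  simp only [Unitary.conjStarAlgAut_apply, Complex.coe_algebraMap, mul_apply,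
    eigenvectorUnitary_apply, diagonal_apply, Function.comp_apply, mul_ite, mul_zero, Finset.sum_ite_eq', Finset.mem_univ, ↓reduceIte,
    star_apply, RCLike.star_def, sum_apply, smul_apply, vecMulVec_apply, Pi.star_apply,
    Complex.coe_smul, Complex.real_smul]
  exact Finset.sum_congr rfl fun _ _ => by ring

lemma Matrix.IsHermitian.mem_of_forall_vecMulVec_star_self_mem {A : Matrix n n ℂ}
    (hA : A.IsHermitian) {S : Submodule ℂ (n → ℂ)} (hAS : matSupport A ≤ S)
    {K : Submodule ℂ (Matrix n n ℂ)} (hK : ∀ x ∈ S, vecMulVec x (star x) ∈ K) : A ∈ K := by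
  rw [hA.eq_sum_smul_vecMulVec]
  refine K.sum_mem fun j _ => ?_
  rcases eq_or_ne (hA.eigenvalues j) 0 with h | h
  · simp [h]
  refine K.smul_mem _ (hK _ ?_)
  have hu : (hA.eigenvalues j : ℂ)⁻¹ • (A *ᵥ ⇑(hA.eigenvectorBasis j)) = hA.eigenvectorBasis j := by
    rw [hA.mulVec_eigenvectorBasis, ← Complex.coe_smul, smul_smul,
      inv_mul_cancel₀ (Complex.ofReal_ne_zero.2 h), one_smul]
  exact hu ▸ S.smul_mem _ (hAS ⟨_, rfl⟩)

end Hermitian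

section Lindblad

variable {n : Type*} [Fintype n] [DecidableEq n] {ι : Type*} [Fintype ι]

lemma lindbladOp_zero_apply (V : ι → Matrix n n ℂ) (ρ : Matrix n n ℂ) :
    lindbladOp 0 V ρ =
      ∑ d, (V d * ρ * (V d)ᴴ - (1 / 2 : ℂ) • ((V d)ᴴ * V d * ρ + ρ * ((V d)ᴴ * V d))) := by
  simp [lindbladOp]

lemma lindbladOp_eq_commutator_add (H : Matrix n n ℂ) (V : ι → Matrix n n ℂ)
    (ρ : Matrix n n ℂ) :
    lindbladOp H V ρ = -Complex.I • (H * ρ - ρ * H) + lindbladOp 0 V ρ := by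
  rw [lindbladOp_zero_apply]
  rfl

variable {H : Matrix n n ℂ} {V : ι → Matrix n n ℂ}

lemma mem_Ecc_of_lindbladOp_eq_smul {A : Matrix n n ℂ} {γ : ℂ} (hγ : γ.re = 0)
    (h : lindbladOp H V A = γ • A) : A ∈ Ecc H V := by
  rcases eq_or_ne A 0 with rfl | hA
  · exact Submodule.zero_mem _
  have hmem : A ∈ eigenspace (lindbladOp H V) γ := mem_eigenspace_iff.2 h
  exact Submodule.mem_iSup_of_mem γ <|
    Submodule.mem_iSup_of_mem ⟨hγ, hasEigenvalue_of_hasEigenvector ⟨hmem, hA⟩⟩ hmem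

omit [DecidableEq n] in
lemma Matrix.IsHermitian.commutator_vecMulVec_star (hH : H.IsHermitian) {x y : n → ℂ} {μ ν : ℂ}
    (hx : H *ᵥ x = μ • x) (hy : H *ᵥ y = ν • y) :
    H * vecMulVec x (star y) - vecMulVec x (star y) * H = (μ - star ν) • vecMulVec x (star y) := by
  have hy' : star y ᵥ* H = star ν • star y := by rw [← hH.eq, ← star_mulVec, hy, star_smul]
  rw [mul_vecMulVec, vecMulVec_mul, hx, hy', smul_vecMulVec, vecMulVec_smul, sub_smul]

lemma vecMulVec_star_mem_Ecc_of_mulVec_eq_smul (hH : H.IsHermitian) {x y : n → ℂ} {μ ν : ℝ}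
    (hx : H *ᵥ x = (μ : ℂ) • x) (hy : H *ᵥ y = (ν : ℂ) • y)
    (hD : lindbladOp 0 V (vecMulVec x (star y)) = 0) : vecMulVec x (star y) ∈ Ecc H V := by
  refine mem_Ecc_of_lindbladOp_eq_smul (γ := -Complex.I * (μ - ν)) (by simp) ?_
  rw [lindbladOp_eq_commutator_add, hD, add_zero, hH.commutator_vecMulVec_star hx hy,
    Complex.star_def, Complex.conj_ofReal, smul_smul]

lemma vecMulVec_star_mem_Ecc (hH : H.IsHermitian) {S : Submodule ℂ (n → ℂ)}
    (hHS : ∀ x ∈ S, H *ᵥ x ∈ S)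
    (hD : ∀ x ∈ S, ∀ y ∈ S, lindbladOp 0 V (vecMulVec x (star y)) = 0)
    {x y : n → ℂ} (hx : x ∈ S) (hy : y ∈ S) : vecMulVec x (star y) ∈ Ecc H V := by
  rw [hH.eq_iSup_inf_eigenspace hHS] at hx hy
  refine Submodule.iSup_induction _ (motive := fun x => vecMulVec x (star y) ∈ Ecc H V) hx
    (fun μ x hx => ?_) (by simp) fun x₁ x₂ h₁ h₂ => by simpa [add_vecMulVec] using add_mem h₁ h₂
  refine Submodule.iSup_induction _ (motive := fun y => vecMulVec x (star y) ∈ Ecc H V) hy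
    (fun ν y hy => ?_) (by simp) fun y₁ y₂ h₁ h₂ => by simpa [vecMulVec_add] using add_mem h₁ h₂
  exact vecMulVec_star_mem_Ecc_of_mulVec_eq_smul hH (mem_eigenspace_iff.1 hx.2)
    (mem_eigenspace_iff.1 hy.2) (hD x hx.1 y hy.1)

end Lindblad

theorem dfs_states_in_invariant_set_general (N : ℕ)
    (H : Matrix (Fin N) (Fin N) ℂ) (hH : H.IsHermitian)
    {ι : Type*} [Fintype ι] (V : ι → Matrix (Fin N) (Fin N) ℂ)
    (S : Submodule ℂ (Fin N → ℂ))
    (hHS : ∀ x ∈ S, H.mulVec x ∈ S)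
    (hdiss : ∀ ρ : Matrix (Fin N) (Fin N) ℂ, IsDensityMatrix ρ → matSupport ρ ≤ S →
      ∑ d, (V d * ρ * (V d)ᴴ - (1 / 2 : ℂ) • ((V d)ᴴ * V d * ρ + ρ * ((V d)ᴴ * V d))) = 0) :
    ∀ ρ : Matrix (Fin N) (Fin N) ℂ, IsDensityMatrix ρ → matSupport ρ ≤ S →
      ρ ∈ Ecc H V := by
  intro ρ hρ hρS
  have hD : ∀ x ∈ S, ∀ y ∈ S, lindbladOp 0 V (vecMulVec x (star y)) = 0 :=
    fun _ hx _ hy => map_vecMulVec_star_eq_zero _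
      (fun ρ hρ hρS => (lindbladOp_zero_apply V ρ).trans (hdiss ρ hρ hρS)) hx hy
  exact hρ.1.isHermitian.mem_of_forall_vecMulVec_star_self_mem hρS
    fun x hx => vecMulVec_star_mem_Ecc hH hHS hD hx hx

/-- Every density matrix supported on a decoherence-free subspace belongs to the
invariant set `E_cc`. -/
theorem dfs_states_in_invariant_set (N : ℕ) (hN : 1 ≤ N)
    (H : Matrix (Fin N) (Fin N) ℂ) (hH : H.IsHermitian)
    {ι : Type*} [Fintype ι] (V : ι → Matrix (Fin N) (Fin N) ℂ)
    (S : Submodule ℂ (Fin N → ℂ))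
    (hHS : ∀ x ∈ S, H.mulVec x ∈ S)
    (hdiss : ∀ ρ : Matrix (Fin N) (Fin N) ℂ, IsDensityMatrix ρ → matSupport ρ ≤ S →
      ∑ d, (V d * ρ * (V d)ᴴ - (1 / 2 : ℂ) • ((V d)ᴴ * V d * ρ + ρ * ((V d)ᴴ * V d))) = 0) :
    ∀ ρ : Matrix (Fin N) (Fin N) ℂ, IsDensityMatrix ρ → matSupport ρ ≤ S →
      ρ ∈ Ecc H V :=
  dfs_states_in_invariant_set_general N H hH V S hHS hdiss
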